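/- A real representation m of quaternionic type of a compact Lie algebra h is never an s-representation of h. -/

import Mathlib

/-!
Write `R(v,w)` for the operator `x ↦ ρ(br x v) w` and `κ(v,w) = tr R(v,w)`, the Ricci form of
the symmetric space `h ⊕ m` up to sign. Since `ρ a` and `I` are skew for `B_m` and commute,
`br u (I v) = br v (I u)`, which makes `I` skew for `κ`: `κ(Iv, w) = -κ(v, Iw)`. The Jacobi
identity reads `ρ(br v w) = R(w,v) - R(v,w)`; composing with `I` and taking traces gives
`κ(v, Iw) = κ(w, Iv)`, because `tr (I ∘ ρ a) = 0`: the map `I ∘ ρ a` anticommutes with `J`.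
The two relations force `κ(u,u) = -κ(u,u)`. In an orthonormal basis
`κ(u,u) = -∑ᵢ B_h(br eᵢ u, br eᵢ u)`, so `br = 0`, hence `ρ = 0`, contradicting faithfulness.
-/

open LinearMap (trace)

theorem LinearMap.trace_eq_zero_of_anticomm {R V : Type*} [CommRing R] [NoZeroDivisors R]
    [CharZero R] [AddCommGroup V] [Module R V] [Module.Free R V] [Module.Finite R V]
    {A J : V →ₗ[R] V} (hJ : ∀ v, J (J v) = -v) (hA : ∀ v, J (A v) = -A (J v)) :
    trace R V A = 0 := by
  have hconj : J ∘ₗ A ∘ₗ J = A := by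
    ext v
    simp [hA, hJ]
  have hsq : A ∘ₗ J ∘ₗ J = -A := by
    ext v
    simp [hJ]
  rw [← CharZero.neg_eq_self_iff]
  calc -trace R V A = trace R V (A ∘ₗ J ∘ₗ J) := by rw [hsq, map_neg]
    _ = trace R V (J ∘ₗ A ∘ₗ J) := by rw [← LinearMap.comp_assoc, trace_comp_comm']
    _ = trace R V A := by rw [hconj]

theorem Module.Basis.trace_eq_sum_of_orthonormal {R V ι : Type*} [CommRing R] [AddCommGroup V]
    [Module R V] [Fintype ι] [DecidableEq ι] (e : Module.Basis ι R V) (B : V →ₗ[R] V →ₗ[R] R)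
    (he : ∀ i j, B (e i) (e j) = if i = j then 1 else 0) (A : V →ₗ[R] V) :
    trace R V A = ∑ i, B (A (e i)) (e i) := by
  have hcoord : ∀ j, B.flip (e j) = e.coord j := fun j ↦
    e.ext fun i ↦ by simp [he, Finsupp.single_apply]
  rw [LinearMap.trace_eq_matrix_trace R e, Matrix.trace]
  refine Finset.sum_congr rfl fun i _ ↦ ?_
  rw [Matrix.diag_apply, LinearMap.toMatrix_apply, ← e.coord_apply, ← hcoord,
    LinearMap.flip_apply]

theorem apply_self_nonneg_of_pos {R V : Type*} [CommSemiring R] [Preorder R]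
    [AddCommMonoid V] [Module R V] {B : V →ₗ[R] V →ₗ[R] R} (hpos : ∀ x, x ≠ 0 → 0 < B x x)
    (x : V) : 0 ≤ B x x := by
  rcases eq_or_ne x 0 with rfl | hx
  · simp
  · exact (hpos x hx).le

theorem eq_zero_of_apply_self_eq_zero {R V : Type*} [CommSemiring R] [Preorder R]
    [AddCommMonoid V] [Module R V] {B : V →ₗ[R] V →ₗ[R] R} (hpos : ∀ x, x ≠ 0 → 0 < B x x)
    {x : V} (hx : B x x = 0) : x = 0 :=
  by_contra fun h ↦ (hpos x h).ne' hx

theorem apply_left_eq_neg_of_isometry_of_sq_eq_neg {R V : Type*} [CommRing R] [AddCommGroup V]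
    [Module R V] {B : V →ₗ[R] V →ₗ[R] R} {I : V →ₗ[R] V} (hI2 : ∀ v, I (I v) = -v)
    (hIorth : ∀ u v, B (I u) (I v) = B u v) (u v : V) : B (I u) v = -B u (I v) := by
  have h := hIorth u (I v)
  rw [hI2, map_neg] at h
  exact neg_eq_iff_eq_neg.mp h

namespace SRepresentation

variable {H M : Type*} [AddCommGroup H] [Module ℝ H] [AddCommGroup M] [Module ℝ M]
  (ρ : H →ₗ[ℝ] M →ₗ[ℝ] M) (br : M →ₗ[ℝ] M →ₗ[ℝ] H)

def curvature : M →ₗ[ℝ] M →ₗ[ℝ] M →ₗ[ℝ] M :=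
  ((LinearMap.llcomp ℝ M H M).compl₁₂ ρ.flip br.flip).flip

@[simp]
theorem curvature_apply (v w x : M) : curvature ρ br v w x = ρ (br x v) w :=
  rfl

noncomputable def ricci : M →ₗ[ℝ] M →ₗ[ℝ] ℝ :=
  (curvature ρ br).compr₂ (trace ℝ M)

theorem ricci_apply (v w : M) : ricci ρ br v w = trace ℝ M (curvature ρ br v w) :=
  rfl

variable {ρ br}

theorem br_swap {BH : H →ₗ[ℝ] H →ₗ[ℝ] ℝ} {BM : M →ₗ[ℝ] M →ₗ[ℝ] ℝ}
    (hBHpos : ∀ x : H, x ≠ 0 → 0 < BH x x) (hBMsym : ∀ u v : M, BM u v = BM v u)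
    (hskew : ∀ (a : H) (u v : M), BM (ρ a u) v + BM u (ρ a v) = 0)
    (hbr : ∀ (a : H) (v w : M), BH a (br v w) = BM (ρ a v) w) (v w : M) :
    br w v = -br v w := by
  rw [eq_neg_iff_add_eq_zero]
  refine eq_zero_of_apply_self_eq_zero hBHpos ?_
  rw [map_add, hbr, hbr, hBMsym _ v, add_comm, hskew]

theorem br_I_comm {BH : H →ₗ[ℝ] H →ₗ[ℝ] ℝ} {BM : M →ₗ[ℝ] M →ₗ[ℝ] ℝ} {I : M →ₗ[ℝ] M}
    (hBHpos : ∀ x : H, x ≠ 0 → 0 < BH x x) (hBMsym : ∀ u v : M, BM u v = BM v u)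
    (hskew : ∀ (a : H) (u v : M), BM (ρ a u) v + BM u (ρ a v) = 0)
    (hbr : ∀ (a : H) (v w : M), BH a (br v w) = BM (ρ a v) w)
    (hIskew : ∀ u v : M, BM (I u) v = -BM u (I v))
    (hIequiv : ∀ (a : H) (v : M), I (ρ a v) = ρ a (I v)) (u v : M) :
    br u (I v) = br v (I u) := by
  rw [← sub_eq_zero]
  refine eq_zero_of_apply_self_eq_zero hBHpos ?_
  set a := br u (I v) - br v (I u)
  have h := hIskew (ρ a v) u
  rw [hIequiv] at h
  rw [map_sub, hbr, hbr]
  linarith [hskew a (I v) u, hBMsym (I v) (ρ a u)]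

theorem comp_curvature {I : M →ₗ[ℝ] M} (hIequiv : ∀ (a : H) (v : M), I (ρ a v) = ρ a (I v))
    (v w : M) : I ∘ₗ curvature ρ br v w = curvature ρ br v (I w) := by
  ext x
  simp [hIequiv]

theorem curvature_I_left {I : M →ₗ[ℝ] M} (hswap : ∀ v w : M, br w v = -br v w)
    (hbrI : ∀ u v : M, br u (I v) = br v (I u)) (v w : M) :
    curvature ρ br (I v) w = -(curvature ρ br v w ∘ₗ I) := by
  ext x
  simp [hbrI x v, hswap (I x) v]

theorem ricci_I_left [FiniteDimensional ℝ M] {I : M →ₗ[ℝ] M}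
    (hswap : ∀ v w : M, br w v = -br v w)
    (hbrI : ∀ u v : M, br u (I v) = br v (I u))
    (hIequiv : ∀ (a : H) (v : M), I (ρ a v) = ρ a (I v)) (v w : M) :
    ricci ρ br (I v) w = -ricci ρ br v (I w) := by
  rw [ricci_apply, ricci_apply, curvature_I_left hswap hbrI, ← comp_curvature hIequiv, map_neg,
    LinearMap.trace_comp_comm']

theorem rho_br_eq_curvature_sub (hswap : ∀ v w : M, br w v = -br v w)
    (hjacobi : ∀ u v w : M, ρ (br u v) w + ρ (br v w) u + ρ (br w u) v = 0) (v w : M) :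
    ρ (br v w) = curvature ρ br w v - curvature ρ br v w := by
  ext x
  have h := hjacobi v w x
  rw [hswap x w, map_neg, LinearMap.neg_apply] at h
  simp only [LinearMap.sub_apply, curvature_apply]
  linear_combination (norm := module) h

theorem trace_comp_rho_eq_zero [FiniteDimensional ℝ M] {I J : M →ₗ[ℝ] M}
    (hJ2 : ∀ v : M, J (J v) = -v)
    (hIJ : ∀ v : M, I (J v) = -J (I v)) (hJequiv : ∀ (a : H) (v : M), J (ρ a v) = ρ a (J v))
    (a : H) : trace ℝ M (I ∘ₗ ρ a) = 0 :=
  LinearMap.trace_eq_zero_of_anticomm hJ2 fun v ↦ by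
    rw [LinearMap.comp_apply, LinearMap.comp_apply, ← hJequiv, hIJ, neg_neg]

theorem ricci_I_right_comm {I : M →ₗ[ℝ] M} (hswap : ∀ v w : M, br w v = -br v w)
    (hjacobi : ∀ u v w : M, ρ (br u v) w + ρ (br v w) u + ρ (br w u) v = 0)
    (hIequiv : ∀ (a : H) (v : M), I (ρ a v) = ρ a (I v))
    (htrI : ∀ a : H, trace ℝ M (I ∘ₗ ρ a) = 0) (v w : M) :
    ricci ρ br v (I w) = ricci ρ br w (I v) := by
  have h := htrI (br v w)
  rw [rho_br_eq_curvature_sub hswap hjacobi, LinearMap.comp_sub, comp_curvature hIequiv,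
    comp_curvature hIequiv, map_sub, sub_eq_zero] at h
  exact h.symm

theorem ricci_self_eq_zero {I : M →ₗ[ℝ] M} (hI2 : ∀ v : M, I (I v) = -v)
    (hleft : ∀ v w : M, ricci ρ br (I v) w = -ricci ρ br v (I w))
    (hright : ∀ v w : M, ricci ρ br v (I w) = ricci ρ br w (I v)) (u : M) :
    ricci ρ br u u = 0 := by
  have h1 := hleft u (I u)
  have h2 := hright u (I u)
  rw [hI2, map_neg] at h1 h2
  linarith

theorem ricci_self_eq_neg_sum {ι : Type*} [Fintype ι] [DecidableEq ι]
    {BH : H →ₗ[ℝ] H →ₗ[ℝ] ℝ} {BM : M →ₗ[ℝ] M →ₗ[ℝ] ℝ} (e : Module.Basis ι ℝ M)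
    (hON : ∀ i j, BM (e i) (e j) = if i = j then 1 else 0)
    (hbr : ∀ (a : H) (v w : M), BH a (br v w) = BM (ρ a v) w)
    (hswap : ∀ v w : M, br w v = -br v w) (u : M) :
    ricci ρ br u u = -∑ i, BH (br (e i) u) (br (e i) u) := by
  rw [ricci_apply, e.trace_eq_sum_of_orthonormal BM hON, ← Finset.sum_neg_distrib]
  refine Finset.sum_congr rfl fun i _ ↦ ?_
  rw [curvature_apply, ← hbr, hswap (e i) u, map_neg]

theorem br_eq_zero {ι : Type*} [Fintype ι] [DecidableEq ι]
    {BH : H →ₗ[ℝ] H →ₗ[ℝ] ℝ} {BM : M →ₗ[ℝ] M →ₗ[ℝ] ℝ} (e : Module.Basis ι ℝ M)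
    (hON : ∀ i j, BM (e i) (e j) = if i = j then 1 else 0)
    (hBHpos : ∀ x : H, x ≠ 0 → 0 < BH x x)
    (hbr : ∀ (a : H) (v w : M), BH a (br v w) = BM (ρ a v) w)
    (hswap : ∀ v w : M, br w v = -br v w) (hricci : ∀ u : M, ricci ρ br u u = 0) :
    br = 0 := by
  suffices h : ∀ u, br.flip u = 0 by
    ext v u
    exact LinearMap.congr_fun (h u) v
  refine fun u ↦ e.ext fun i ↦ eq_zero_of_apply_self_eq_zero hBHpos ?_
  have hsum : ∑ j, BH (br (e j) u) (br (e j) u) = 0 := by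
    rw [← neg_eq_zero, ← ricci_self_eq_neg_sum e hON hbr hswap, hricci]
  exact (Finset.sum_eq_zero_iff_of_nonneg fun j _ ↦ apply_self_nonneg_of_pos hBHpos _).mp hsum i
    (Finset.mem_univ i)

theorem rho_eq_zero_of_br_eq_zero {BH : H →ₗ[ℝ] H →ₗ[ℝ] ℝ} {BM : M →ₗ[ℝ] M →ₗ[ℝ] ℝ}
    (hBMpos : ∀ v : M, v ≠ 0 → 0 < BM v v)
    (hbr : ∀ (a : H) (v w : M), BH a (br v w) = BM (ρ a v) w) (h : br = 0) : ρ = 0 := by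
  ext a v
  refine eq_zero_of_apply_self_eq_zero hBMpos ?_
  rw [← hbr, h, LinearMap.zero_apply, LinearMap.zero_apply, map_zero]

end SRepresentation

open SRepresentation

theorem quaternionic_type_never_s_representation_general
    {H M : Type*} [LieRing H] [LieAlgebra ℝ H] [Nontrivial H]
    [AddCommGroup M] [Module ℝ M]
    (ρ : H →ₗ[ℝ] M →ₗ[ℝ] M)
    (hfaith : Function.Injective ρ)
    (BH : H →ₗ[ℝ] H →ₗ[ℝ] ℝ) (BM : M →ₗ[ℝ] M →ₗ[ℝ] ℝ)
    (hBHpos : ∀ x : H, x ≠ 0 → 0 < BH x x)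
    (hBMsym : ∀ u v : M, BM u v = BM v u)
    (hBMpos : ∀ v : M, v ≠ 0 → 0 < BM v v)
    (hskew : ∀ (a : H) (u v : M), BM (ρ a u) v + BM u (ρ a v) = 0)
    (n : ℕ) (e : Module.Basis (Fin n) ℝ M)
    (hON : ∀ i j, BM (e i) (e j) = if i = j then 1 else 0)
    (I J : M →ₗ[ℝ] M)
    (hI2 : ∀ v : M, I (I v) = -v) (hJ2 : ∀ v : M, J (J v) = -v)
    (hIJ : ∀ v : M, I (J v) = - J (I v))
    (hIequiv : ∀ (a : H) (v : M), I (ρ a v) = ρ a (I v))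
    (hJequiv : ∀ (a : H) (v : M), J (ρ a v) = ρ a (J v))
    (hIorth : ∀ u v : M, BM (I u) (I v) = BM u v)
    (br : M →ₗ[ℝ] M →ₗ[ℝ] H)
    (hbr : ∀ (a : H) (v w : M), BH a (br v w) = BM (ρ a v) w)
    (hjacobi : ∀ u v w : M, ρ (br u v) w + ρ (br v w) u + ρ (br w u) v = 0) :
    False := by
  have := Module.Finite.of_basis e
  have hswap := br_swap hBHpos hBMsym hskew hbr
  have hbrI := br_I_comm hBHpos hBMsym hskew hbr
    (apply_left_eq_neg_of_isometry_of_sq_eq_neg hI2 hIorth) hIequiv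
  have hricci : ∀ u, ricci ρ br u u = 0 :=
    ricci_self_eq_zero hI2 (ricci_I_left hswap hbrI hIequiv)
      (ricci_I_right_comm hswap hjacobi hIequiv (trace_comp_rho_eq_zero hJ2 hIJ hJequiv))
  have hρ : ρ = 0 :=
    rho_eq_zero_of_br_eq_zero hBMpos hbr (br_eq_zero e hON hBHpos hbr hswap hricci)
  obtain ⟨a, b, hab⟩ := exists_pair_ne H
  exact hab (hfaith (by rw [hρ]; rfl))

/-- An irreducible real representation `m` of quaternionic type of
a compact Lie algebra `(h,B_h)` (so `m` carries invariant anticommuting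
orthogonal complex structures `I`, `J`, and its commuting algebra is spanned by
`id, I, J, IJ`) is never an s-representation of `h`: the bracket on `h ⊕ m`
defined by `B_h(a,[v,w]) = B_m(av,w)` cannot satisfy the Jacobi identity. -/
theorem quaternionic_type_never_s_representation
    {H M : Type*} [LieRing H] [LieAlgebra ℝ H] [Nontrivial H]
    [AddCommGroup M] [Module ℝ M]
    (ρ : H →ₗ[ℝ] M →ₗ[ℝ] M)
    (hρLie : ∀ (a b : H) (v : M), ρ ⁅a, b⁆ v = ρ a (ρ b v) - ρ b (ρ a v))
    (hfaith : Function.Injective ρ)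
    (BH : H →ₗ[ℝ] H →ₗ[ℝ] ℝ) (BM : M →ₗ[ℝ] M →ₗ[ℝ] ℝ)
    (hBHsym : ∀ x y : H, BH x y = BH y x)
    (hBHpos : ∀ x : H, x ≠ 0 → 0 < BH x x)
    (hBHinv : ∀ a x y : H, BH ⁅a, x⁆ y + BH x ⁅a, y⁆ = 0)
    (hBMsym : ∀ u v : M, BM u v = BM v u)
    (hBMpos : ∀ v : M, v ≠ 0 → 0 < BM v v)
    (hskew : ∀ (a : H) (u v : M), BM (ρ a u) v + BM u (ρ a v) = 0)
    (hirr : ∀ p : Submodule ℝ M, (∀ (a : H), ∀ v ∈ p, ρ a v ∈ p) → p = ⊥ ∨ p = ⊤)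
    (n : ℕ) (e : Module.Basis (Fin n) ℝ M)
    (hON : ∀ i j, BM (e i) (e j) = if i = j then 1 else 0)
    (I J : M →ₗ[ℝ] M)
    (hI2 : ∀ v : M, I (I v) = -v) (hJ2 : ∀ v : M, J (J v) = -v)
    (hIJ : ∀ v : M, I (J v) = - J (I v))
    (hIequiv : ∀ (a : H) (v : M), I (ρ a v) = ρ a (I v))
    (hJequiv : ∀ (a : H) (v : M), J (ρ a v) = ρ a (J v))
    (hIorth : ∀ u v : M, BM (I u) (I v) = BM u v)
    (hJorth : ∀ u v : M, BM (J u) (J v) = BM u v)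
    (hquat : ∀ f : M →ₗ[ℝ] M, (∀ (a : H) (v : M), f (ρ a v) = ρ a (f v)) →
      ∃ α β γ δ : ℝ,
        f = α • LinearMap.id + β • I + γ • J + δ • (I ∘ₗ J))
    (br : M →ₗ[ℝ] M →ₗ[ℝ] H)
    (hbr : ∀ (a : H) (v w : M), BH a (br v w) = BM (ρ a v) w)
    (hequiv : ∀ (a : H) (v w : M), ⁅a, br v w⁆ = br (ρ a v) w + br v (ρ a w))
    (hjacobi : ∀ u v w : M, ρ (br u v) w + ρ (br v w) u + ρ (br w u) v = 0) :
    False :=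
  quaternionic_type_never_s_representation_general ρ hfaith BH BM hBHpos hBMsym hBMpos hskew n e hON
    I J hI2 hJ2 hIJ hIequiv hJequiv hIorth br hbr hjacobi
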